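/- Let Δx > 0 and let p be the unique quintic polynomial such that for ℓ ∈ {-1, 0, 1}, (1/Δx)∫_{x_{i+ℓ}-Δx/2}^{x_{i+ℓ}+Δx/2} p = f_{i+ℓ} and (1/Δx)∫_{x_{i+ℓ}-Δx/2}^{x_{i+ℓ}+Δx/2} p' = h_{i+ℓ}, where x_{i+ℓ} = x_i + ℓΔx. Then p(x_i + Δx/2) = (11/60) f_{i-1} + (19/30) f_i + (11/60) f_{i+1} + (Δx/20)(h_{i-1} + 10 h_i − h_{i+1}). -/

import Mathlib

/-!
Both sides of the identity are linear in `p`, and each cell average of `p` or of `p'` is an explicit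
linear form in the six coefficients of `p`: the averages of `p'` telescope to differences of values
of `p` (fundamental theorem of calculus), and the averages of `p` are obtained by integrating the
monomials termwise. After this expansion the claim is a polynomial identity in `xi`, `Δx` and the
coefficients of `p`, once the factors `1 / Δx` are cleared.
-/

open intervalIntegral Polynomial

namespace Polynomial

theorem integral_eval_derivative (p : ℝ[X]) (a b : ℝ) :
    ∫ x in a..b, p.derivative.eval x = p.eval b - p.eval a :=
  integral_eq_sub_of_hasDerivAt (fun x _ => p.hasDerivAt x)
    (p.derivative.continuous.intervalIntegrable a b)

theorem integral_eval_eq_sum_range {p : ℝ[X]} {n : ℕ} (hn : p.natDegree < n) (a b : ℝ) :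
    ∫ x in a..b, p.eval x =
      ∑ k ∈ Finset.range n, p.coeff k * ((b ^ (k + 1) - a ^ (k + 1)) / (k + 1)) := by
  simp_rw [eval_eq_sum_range' hn]
  rw [integral_finsetSum fun k _ =>
    ((continuous_pow k).const_mul (p.coeff k)).intervalIntegrable a b]
  simp only [integral_const_mul, integral_pow]

end Polynomial

theorem stmt_2 (Δx xi fim1 fi fip1 him1 hi hip1 : ℝ) (hΔ : 0 < Δx)
    (p : Polynomial ℝ) (hdeg : p.natDegree ≤ 5)
    (hf1 : (1 / Δx) * ∫ x in ((xi - Δx) - Δx / 2)..((xi - Δx) + Δx / 2), p.eval x = fim1)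
    (hf2 : (1 / Δx) * ∫ x in (xi - Δx / 2)..(xi + Δx / 2), p.eval x = fi)
    (hf3 : (1 / Δx) * ∫ x in ((xi + Δx) - Δx / 2)..((xi + Δx) + Δx / 2), p.eval x = fip1)
    (hh1 : (1 / Δx) * ∫ x in ((xi - Δx) - Δx / 2)..((xi - Δx) + Δx / 2),
        (Polynomial.derivative p).eval x = him1)
    (hh2 : (1 / Δx) * ∫ x in (xi - Δx / 2)..(xi + Δx / 2),
        (Polynomial.derivative p).eval x = hi)
    (hh3 : (1 / Δx) * ∫ x in ((xi + Δx) - Δx / 2)..((xi + Δx) + Δx / 2),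
        (Polynomial.derivative p).eval x = hip1) :
    p.eval (xi + Δx / 2) =
      (11 / 60) * fim1 + (19 / 30) * fi + (11 / 60) * fip1
        + (Δx / 20) * (him1 + 10 * hi - hip1) := by
  have hp : p.natDegree < 6 := by omega
  rw [integral_eval_eq_sum_range hp] at hf1 hf2 hf3
  rw [integral_eval_derivative] at hh1 hh2 hh3
  subst hf1 hf2 hf3 hh1 hh2 hh3
  simp only [eval_eq_sum_range' hp, Finset.sum_range_succ, Finset.sum_range_zero]
  field_simp [hΔ.ne']
  ring
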